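/- Let (P_n) be as above (P_0, P_1 units in Λ_0, Λ_1; π_{n+1/n}(P_{n+1}) = a·P_n - ν_{n-1/n}(P_{n-1}) with a ∈ pZ_p). Set J_n = (P_n, ν_{n-1/n}(P_{n-1})) ⊆ Λ_n for n ≥ 1 and J_0 = (P_0). Then ν_{n-1/n}(J_{n-1}) ⊆ J_n, and there is a short exact sequence of Z_p-modules 0 → Λ_{n-1}/J_{n-1} → Λ_n/J_n → Z_p[μ_{p^n}]/(χ(P_n)) → 0, where the first map is induced by ν_{n-1/n} and the second by a character χ of G_n of exact order p^n. -/

import Mathlib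

open MonoidAlgebra Finset

/-- `G_n`: cyclic group of order `p^n`. -/
abbrev Gn (p n : ℕ) := Multiplicative (ZMod (p ^ n))

/-- `Λ_n = ℤ_p[G_n]`. -/
abbrev Lam (p : ℕ) [Fact p.Prime] (n : ℕ) := MonoidAlgebra ℤ_[p] (Gn p n)

/-- `ξ_n`: sum of the elements of the subgroup of order `p`. -/
noncomputable def xi (p : ℕ) [Fact p.Prime] (n : ℕ) : Lam p n :=
  ∑ σ ∈ Finset.univ.filter (fun σ : Gn p n => σ ^ p = 1), MonoidAlgebra.of ℤ_[p] (Gn p n) σ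

/-- The natural surjection `G_{n+1} →* G_n`. -/
noncomputable def projHom (p n : ℕ) : Gn p (n+1) →* Gn p n :=
  AddMonoidHom.toMultiplicative
    (ZMod.castHom (pow_dvd_pow p (Nat.le_succ n)) (ZMod (p^n))).toAddMonoidHom

/-- `π_{n+1/n} : Λ_{n+1} →+* Λ_n`, the induced projection of group algebras. -/
noncomputable def piMap (p : ℕ) [Fact p.Prime] (n : ℕ) : Lam p (n+1) →+* Lam p n :=
  MonoidAlgebra.mapDomainRingHom ℤ_[p] (projHom p n)

/-- `ν_{n/n+1} : Λ_n → Λ_{n+1}`, sending `σ` to the sum of its preimages. -/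
noncomputable def nuMap (p : ℕ) [Fact p.Prime] (n : ℕ) (f : Lam p n) : Lam p (n+1) :=
  ∑ τ : Gn p (n+1), MonoidAlgebra.single τ (f.coeff (projHom p n τ))

/-- Reduction mod `p`: `ℤ_p[G_n] → 𝔽_p[G_n]` (coefficientwise). -/
noncomputable def red (p : ℕ) [Fact p.Prime] (n : ℕ) (f : Lam p n) :
    MonoidAlgebra (ZMod p) (Gn p n) :=
  MonoidAlgebra.ofCoeff (Finsupp.mapRange (PadicInt.toZMod) (map_zero _) f.coeff)

/-- The augmentation ideal `Ĩ_n` of `𝔽_p[G_n]`. -/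
noncomputable def augIdeal (p : ℕ) [Fact p.Prime] (n : ℕ) :
    Ideal (MonoidAlgebra (ZMod p) (Gn p n)) :=
  RingHom.ker ((MonoidAlgebra.lift (ZMod p) (ZMod p) (Gn p n)) 1).toRingHom

/-!
`ν = nuMap` and `π = piMap` satisfy `ν (π x) = ξ x` and `π (ν f) = p f`; hence `ν` is injective,
`ν (f · π y) = ν f · y`, and the image of `ν` is `ξ Λ_{n+1} = ker χ`. As `χ ∘ ν = 0`, `χ` maps
`J_{n+1}` into `(χ P_{n+1})`, which yields the second map and exactness in the middle.
For injectivity of the first map, write `ν f = g P_{n+1} + h ν P_n`: applying `χ` gives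
`χ g · χ P_{n+1} = 0`, so `g = ν y` and `f = y π P_{n+1} + P_n π h`, which lies in `J_n` because
`π P_{n+1} ∈ J_n` by the recursion.
The one nontrivial input is `χ P_{n+1} ≠ 0`, the substitute for `μ(P_n) = 0`: otherwise
`π P_{n+1} ∈ p Λ_n`, whereas the recursion, with `p ∣ a` and `ν f ≡ 0 mod p ⇒ f ≡ 0 mod p`,
propagates "`P_0`, `P_1` are units" to "`P_m ≢ 0 mod p`" for every `m`.
-/

namespace Ideal

variable {R A B : Type*} [CommRing R] [CommRing A] [CommRing B] [Algebra R A] [Algebra R B]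

noncomputable def quotientMapₗ (I : Ideal A) (K : Ideal B) (f : A →ₗ[R] B)
    (hf : ∀ x ∈ I, f x ∈ K) : (A ⧸ I) →ₗ[R] (B ⧸ K) :=
  (Submodule.liftQ (I.restrictScalars R) ((Quotient.mkₐ R K).toLinearMap ∘ₗ f)
    fun x hx => Quotient.eq_zero_iff_mem.mpr (hf x hx)) ∘ₗ
    (Submodule.Quotient.restrictScalarsEquiv R I).symm.toLinearMap

lemma quotientMapₗ_mk (I : Ideal A) (K : Ideal B) (f : A →ₗ[R] B) (hf : ∀ x ∈ I, f x ∈ K)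
    (x : A) : quotientMapₗ I K f hf (Quotient.mk I x) = Quotient.mk K (f x) :=
  rfl

end Ideal

section Group

variable (p n : ℕ)

lemma projHom_surjective : Function.Surjective (projHom p n) := fun σ => by
  obtain ⟨x, hx⟩ := ZMod.ringHom_surjective (ZMod.castHom (pow_dvd_pow p n.le_succ) _) σ.toAdd
  exact ⟨.ofAdd x, congrArg Multiplicative.ofAdd hx⟩

lemma pow_eq_one_iff_projHom_eq_one [Fact p.Prime] (τ : Gn p (n+1)) :
    τ ^ p = 1 ↔ projHom p n τ = 1 := by
  obtain ⟨k, hk⟩ := ZMod.natCast_zmod_surjective τ.toAdd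
  obtain rfl : τ = .ofAdd (k : ZMod (p ^ (n+1))) := hk ▸ rfl
  have hp := (Fact.out : p.Prime).ne_zero
  simp only [projHom, AddMonoidHom.toMultiplicative_apply_apply, RingHom.toAddMonoidHom_eq_coe,
    AddMonoidHom.coe_coe, toAdd_ofAdd, map_natCast, ← ofAdd_nsmul, ← ofAdd_zero,
    Multiplicative.ofAdd.apply_eq_iff_eq, nsmul_eq_mul, ← Nat.cast_mul, ZMod.natCast_eq_zero_iff,
    pow_succ', Nat.mul_dvd_mul_iff_left (Nat.pos_of_ne_zero hp)]

lemma card_ker_projHom [Fact p.Prime] : Nat.card (projHom p n).ker = p := by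
  have h := (projHom p n).ker.card_mul_index
  rw [Subgroup.index_ker, (projHom p n).range_eq_top.mpr (projHom_surjective p n),
    Subgroup.card_top] at h
  have hG (m : ℕ) : Nat.card (Gn p m) = p ^ m :=
    (Nat.card_congr Multiplicative.toAdd).trans (Nat.card_zmod _)
  rw [hG, hG] at h
  exact Nat.eq_of_mul_eq_mul_right (pow_pos (Fact.out : p.Prime).pos n) (h.trans (pow_succ' p n))

end Group

section NormMap

variable {p : ℕ} [Fact p.Prime] {n : ℕ}

lemma coeff_nuMap (f : Lam p n) (τ : Gn p (n+1)) :
    (nuMap p n f).coeff τ = f.coeff (projHom p n τ) := by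
  simp [nuMap, MonoidAlgebra.coeff_sum, Finsupp.finsetSum_apply, Finsupp.single_apply]

variable (p n) in
noncomputable def nuLinearMap : Lam p n →ₗ[ℤ_[p]] Lam p (n+1) where
  toFun := nuMap p n
  map_add' f g := by ext τ; simp [coeff_nuMap]
  map_smul' c f := by ext τ; simp [coeff_nuMap]

lemma nuMap_add (f g : Lam p n) : nuMap p n (f + g) = nuMap p n f + nuMap p n g :=
  (nuLinearMap p n).map_add f g

lemma nuMap_sub (f g : Lam p n) : nuMap p n (f - g) = nuMap p n f - nuMap p n g :=
  (nuLinearMap p n).map_sub f g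

lemma nuMap_zero : nuMap p n 0 = 0 :=
  (nuLinearMap p n).map_zero

lemma nuMap_smul (c : ℤ_[p]) (f : Lam p n) : nuMap p n (c • f) = c • nuMap p n f :=
  (nuLinearMap p n).map_smul c f

lemma coeff_xi (τ : Gn p (n+1)) :
    (xi p (n+1)).coeff τ = if projHom p n τ = 1 then 1 else 0 := by
  simp [xi, MonoidAlgebra.coeff_sum, Finsupp.finsetSum_apply, Finsupp.single_apply,
    pow_eq_one_iff_projHom_eq_one]

lemma piMap_single (τ : Gn p (n+1)) (c : ℤ_[p]) :
    piMap p n (single τ c) = single (projHom p n τ) c :=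
  mapDomain_single

variable (p n) in
lemma piMap_surjective : Function.Surjective (piMap p n) := by
  intro f
  induction f using MonoidAlgebra.induction_linear with
  | zero => exact ⟨0, map_zero _⟩
  | add f g hf hg =>
    obtain ⟨x, rfl⟩ := hf
    obtain ⟨y, rfl⟩ := hg
    exact ⟨x + y, map_add _ x y⟩
  | single σ c =>
    obtain ⟨τ, rfl⟩ := projHom_surjective p n σ
    exact ⟨single τ c, piMap_single τ c⟩

lemma nuMap_piMap (x : Lam p (n+1)) : nuMap p n (piMap p n x) = xi p (n+1) * x := by
  induction x using MonoidAlgebra.induction_linear with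
  | zero => rw [map_zero, mul_zero, nuMap_zero]
  | add x y hx hy => rw [map_add, nuMap_add, hx, hy, mul_add]
  | single τ c =>
    ext τ₀
    simp [piMap_single, coeff_nuMap, coeff_xi, Finsupp.single_apply, mul_inv_eq_one,
      eq_comm (a := projHom p n τ₀)]

variable (p n) in
lemma piMap_xi : piMap p n (xi p (n+1)) = p := by
  have hfilter : univ.filter (fun σ : Gn p (n+1) => σ ^ p = 1) =
      univ.filter (· ∈ (projHom p n).ker) := by
    simp [MonoidHom.mem_ker, pow_eq_one_iff_projHom_eq_one]
  have hone (σ : Gn p (n+1)) (hσ : σ ∈ univ.filter (· ∈ (projHom p n).ker)) :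
      piMap p n (of ℤ_[p] _ σ) = 1 := by
    rw [of_apply, piMap_single, (mem_filter.mp hσ).2, one_def]
  rw [xi, map_sum, Finset.sum_congr hfilter hone, Finset.sum_const, ← Fintype.card_subtype,
    ← Nat.card_eq_fintype_card, card_ker_projHom, nsmul_one]

lemma piMap_nuMap (f : Lam p n) : piMap p n (nuMap p n f) = p * f := by
  obtain ⟨x, rfl⟩ := piMap_surjective p n f
  rw [nuMap_piMap, map_mul, piMap_xi]

lemma nuMap_mul_piMap (f : Lam p n) (y : Lam p (n+1)) :
    nuMap p n (f * piMap p n y) = nuMap p n f * y := by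
  obtain ⟨x, rfl⟩ := piMap_surjective p n f
  rw [← map_mul, nuMap_piMap, nuMap_piMap, mul_assoc]

lemma natCast_mul_injective : Function.Injective ((p : Lam p n) * ·) := by
  have hp : (p : ℤ_[p]) ≠ 0 := Nat.cast_ne_zero.mpr (Fact.out : p.Prime).ne_zero
  intro f g h
  apply smul_right_injective (Lam p n) hp
  simpa only [Algebra.smul_def, map_natCast] using h

lemma nuMap_injective : Function.Injective (nuMap p n) := fun f g h =>
  natCast_mul_injective (by simpa only [piMap_nuMap] using congrArg (piMap p n) h)

lemma mem_span_xi_iff (x : Lam p (n+1)) :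
    x ∈ Ideal.span {xi p (n+1)} ↔ ∃ f, nuMap p n f = x := by
  rw [Ideal.mem_span_singleton']
  constructor
  · rintro ⟨y, rfl⟩
    exact ⟨piMap p n y, by rw [nuMap_piMap, mul_comm]⟩
  · rintro ⟨f, rfl⟩
    obtain ⟨y, rfl⟩ := piMap_surjective p n f
    exact ⟨y, by rw [nuMap_piMap, mul_comm]⟩

lemma nuMap_mem_of_mem_span {S : Set (Lam p n)} {K : Ideal (Lam p (n+1))}
    (hS : ∀ s ∈ S, nuMap p n s ∈ K) {x : Lam p n} (hx : x ∈ Ideal.span S) :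
    nuMap p n x ∈ K := by
  induction hx using Submodule.span_induction with
  | mem s hs => exact hS s hs
  | zero => exact nuMap_zero (p := p) ▸ K.zero_mem
  | add x y _ _ hx hy => exact nuMap_add x y ▸ K.add_mem hx hy
  | smul c x _ hx =>
    obtain ⟨d, rfl⟩ := piMap_surjective p n c
    rw [smul_eq_mul, mul_comm, nuMap_mul_piMap]
    exact K.mul_mem_right d hx

end NormMap

section Reduction

variable {p : ℕ} [Fact p.Prime] {n : ℕ}

lemma red_eq_mapRingHom (f : Lam p n) :
    red p n f = mapRingHom (Gn p n) (PadicInt.toZMod (p := p)) f := rfl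

lemma red_ne_zero_of_isUnit {f : Lam p n} (hf : IsUnit f) : red p n f ≠ 0 := by
  rw [red_eq_mapRingHom]
  exact (hf.map _).ne_zero

lemma red_natCast_mul (f : Lam p n) : red p n (p * f) = 0 := by
  rw [red_eq_mapRingHom, map_mul, map_natCast,
    ← map_natCast (algebraMap (ZMod p) (MonoidAlgebra (ZMod p) (Gn p n))), ZMod.natCast_self,
    map_zero, zero_mul]

lemma red_smul_of_dvd {a : ℤ_[p]} (ha : (p : ℤ_[p]) ∣ a) (f : Lam p n) :
    red p n (a • f) = 0 := by
  obtain ⟨b, rfl⟩ := ha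
  rw [mul_smul, Algebra.smul_def, map_natCast, red_natCast_mul]

lemma red_piMap (x : Lam p (n+1)) :
    red p n (piMap p n x) = mapDomainRingHom (ZMod p) (projHom p n) (red p (n+1) x) := by
  simp only [red_eq_mapRingHom, piMap, ← RingHom.comp_apply, mapRingHom_comp_mapDomainRingHom]

lemma red_piMap_eq_zero {x : Lam p (n+1)} (hx : red p (n+1) x = 0) :
    red p n (piMap p n x) = 0 := by
  rw [red_piMap, hx, map_zero]

lemma red_eq_zero_of_red_nuMap_eq_zero {f : Lam p n} (h : red p (n+1) (nuMap p n f) = 0) :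
    red p n f = 0 := by
  ext σ
  obtain ⟨τ, rfl⟩ := projHom_surjective p n σ
  simpa [red_eq_mapRingHom, coeff_nuMap] using congrArg (fun g => g.coeff τ) h

lemma red_piMap_eq_zero_of_mem_span_xi {x : Lam p (n+1)} (hx : x ∈ Ideal.span {xi p (n+1)}) :
    red p n (piMap p n x) = 0 := by
  obtain ⟨y, rfl⟩ := Ideal.mem_span_singleton'.mp hx
  rw [mul_comm, map_mul, piMap_xi, red_natCast_mul]

end Reduction

section Sequence

variable {p : ℕ} [Fact p.Prime] {P : ∀ n, Lam p n} {a : ℤ_[p]}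

lemma red_eq_zero_of_red_piMap_eq_zero (ha : (p : ℤ_[p]) ∣ a) {n : ℕ} {x : Lam p (n+2)}
    {y : Lam p (n+1)} {z : Lam p n} (h : piMap p (n+1) x = a • y - nuMap p n z)
    (hx : red p (n+1) (piMap p (n+1) x) = 0) : red p n z = 0 := by
  refine red_eq_zero_of_red_nuMap_eq_zero ?_
  rw [show nuMap p n z = a • y - piMap p (n+1) x by rw [h, sub_sub_cancel], red_eq_mapRingHom,
    map_sub, ← red_eq_mapRingHom, ← red_eq_mapRingHom, red_smul_of_dvd ha, hx, sub_zero]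

lemma red_seq_ne_zero (hP0 : IsUnit (P 0)) (hP1 : IsUnit (P 1)) (ha : (p : ℤ_[p]) ∣ a)
    (hrec : ∀ n : ℕ, piMap p (n+1) (P (n+2)) = a • P (n+1) - nuMap p n (P n)) (m : ℕ) :
    red p m (P m) ≠ 0 := by
  induction m using Nat.twoStepInduction with
  | zero => exact red_ne_zero_of_isUnit hP0
  | one => exact red_ne_zero_of_isUnit hP1
  | more k hk _ =>
    exact fun h => hk (red_eq_zero_of_red_piMap_eq_zero ha (hrec k) (red_piMap_eq_zero h))

lemma red_piMap_seq_ne_zero (hP0 : IsUnit (P 0)) (hP1 : IsUnit (P 1)) (ha : (p : ℤ_[p]) ∣ a)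
    (hrec : ∀ n : ℕ, piMap p (n+1) (P (n+2)) = a • P (n+1) - nuMap p n (P n))
    (hP10 : ∃ u : ℤ_[p], IsUnit u ∧ piMap p 0 (P 1) = u • P 0) (m : ℕ) :
    red p m (piMap p m (P (m+1))) ≠ 0 := by
  cases m with
  | zero =>
    obtain ⟨u, hu, hP10⟩ := hP10
    rw [hP10, Algebra.smul_def]
    exact red_ne_zero_of_isUnit ((hu.map _).mul hP0)
  | succ k =>
    exact fun h =>
      red_seq_ne_zero hP0 hP1 ha hrec k (red_eq_zero_of_red_piMap_eq_zero ha (hrec k) h)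

end Sequence

section Ideals

variable {p : ℕ} [Fact p.Prime] {P : ∀ n, Lam p n} {a : ℤ_[p]} {J : ∀ n, Ideal (Lam p n)}

lemma seq_mem (hJ0 : J 0 = Ideal.span {P 0})
    (hJ : ∀ n : ℕ, J (n+1) = Ideal.span {P (n+1), nuMap p n (P n)}) (n : ℕ) : P n ∈ J n := by
  cases n with
  | zero => exact hJ0 ▸ Ideal.mem_span_singleton_self _
  | succ m => exact hJ m ▸ Ideal.subset_span (Set.mem_insert _ _)

lemma piMap_seq_mem (hrec : ∀ n : ℕ, piMap p (n+1) (P (n+2)) = a • P (n+1) - nuMap p n (P n))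
    (hP10 : ∃ u : ℤ_[p], IsUnit u ∧ piMap p 0 (P 1) = u • P 0)
    (hJ0 : J 0 = Ideal.span {P 0})
    (hJ : ∀ n : ℕ, J (n+1) = Ideal.span {P (n+1), nuMap p n (P n)}) (n : ℕ) :
    piMap p n (P (n+1)) ∈ J n := by
  cases n with
  | zero =>
    obtain ⟨u, -, hP10⟩ := hP10
    rw [hP10, Algebra.smul_def]
    exact Ideal.mul_mem_left _ _ (seq_mem hJ0 hJ 0)
  | succ m =>
    rw [hrec m, Algebra.smul_def]
    refine sub_mem (Ideal.mul_mem_left _ _ (seq_mem hJ0 hJ _)) ?_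
    exact hJ m ▸ Ideal.subset_span (Set.mem_insert_of_mem _ rfl)

lemma nuMap_mem_succ (hrec : ∀ n : ℕ, piMap p (n+1) (P (n+2)) = a • P (n+1) - nuMap p n (P n))
    (hJ0 : J 0 = Ideal.span {P 0})
    (hJ : ∀ n : ℕ, J (n+1) = Ideal.span {P (n+1), nuMap p n (P n)}) (n : ℕ) :
    ∀ x ∈ J n, nuMap p n x ∈ J (n+1) := by
  have hgen (n : ℕ) : nuMap p n (P n) ∈ J (n+1) :=
    hJ n ▸ Ideal.subset_span (Set.mem_insert_of_mem _ rfl)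
  intro x hx
  cases n with
  | zero =>
    rw [hJ0] at hx
    exact nuMap_mem_of_mem_span (by simpa using hgen 0) hx
  | succ m =>
    rw [hJ m] at hx
    refine nuMap_mem_of_mem_span ?_ hx
    rintro s (rfl | rfl)
    · exact hgen (m+1)
    · rw [show nuMap p m (P m) = a • P (m+1) - piMap p (m+1) (P (m+2)) by
          rw [hrec, sub_sub_cancel],
        nuMap_sub, nuMap_smul, nuMap_piMap, Algebra.smul_def]
      exact sub_mem (Ideal.mul_mem_left _ _ (hgen _)) (Ideal.mul_mem_left _ _ (seq_mem hJ0 hJ _))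

end Ideals

section Character

variable {p : ℕ} [Fact p.Prime] {n : ℕ} {O : Type*} [CommRing O] [Algebra ℤ_[p] O]
  {χ : Lam p (n+1) →ₐ[ℤ_[p]] O}

lemma map_eq_zero_iff_exists_nuMap (hχker : RingHom.ker χ.toRingHom = Ideal.span {xi p (n+1)})
    (x : Lam p (n+1)) : χ x = 0 ↔ ∃ f, nuMap p n f = x := by
  rw [← mem_span_xi_iff, ← hχker, RingHom.mem_ker]
  rfl

lemma map_nuMap (hχker : RingHom.ker χ.toRingHom = Ideal.span {xi p (n+1)}) (f : Lam p n) :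
    χ (nuMap p n f) = 0 :=
  (map_eq_zero_iff_exists_nuMap hχker _).mpr ⟨f, rfl⟩

lemma map_ne_zero_of_red_piMap_ne_zero
    (hχker : RingHom.ker χ.toRingHom = Ideal.span {xi p (n+1)})
    {x : Lam p (n+1)} (hx : red p n (piMap p n x) ≠ 0) : χ x ≠ 0 := fun h =>
  hx (red_piMap_eq_zero_of_mem_span_xi (hχker ▸ RingHom.mem_ker.mpr h))

lemma map_mem_span_of_mem_span_pair (hχker : RingHom.ker χ.toRingHom = Ideal.span {xi p (n+1)})
    {P : Lam p (n+1)} {Q : Lam p n} {z : Lam p (n+1)} (hz : z ∈ Ideal.span {P, nuMap p n Q}) :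
    χ z ∈ Ideal.span {χ P} := by
  obtain ⟨g, h, rfl⟩ := Ideal.mem_span_pair.mp hz
  rw [map_add, map_mul, map_mul, map_nuMap hχker, mul_zero, add_zero]
  exact Ideal.mul_mem_left _ _ (Ideal.mem_span_singleton_self _)

lemma mem_of_nuMap_mem_span_pair [IsDomain O]
    (hχker : RingHom.ker χ.toRingHom = Ideal.span {xi p (n+1)})
    {P : Lam p (n+1)} {Q : Lam p n} {I : Ideal (Lam p n)} (hQ : Q ∈ I) (hP : piMap p n P ∈ I)
    (hχP : χ P ≠ 0) {f : Lam p n} (hf : nuMap p n f ∈ Ideal.span {P, nuMap p n Q}) : f ∈ I := by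
  obtain ⟨g, h, hgh⟩ := Ideal.mem_span_pair.mp hf
  have hχg : χ g = 0 := by
    have := congrArg χ hgh
    rw [map_add, map_mul, map_mul, map_nuMap hχker, map_nuMap hχker, mul_zero, add_zero] at this
    exact (mul_eq_zero.mp this).resolve_right hχP
  obtain ⟨y, rfl⟩ := (map_eq_zero_iff_exists_nuMap hχker g).mp hχg
  have : f = y * piMap p n P + Q * piMap p n h := nuMap_injective <| by
    rw [nuMap_add, nuMap_mul_piMap, nuMap_mul_piMap, ← hgh, mul_comm h]
  exact this ▸ add_mem (I.mul_mem_left _ hP) (I.mul_mem_right _ hQ)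

lemma map_mem_span_iff_exists_nuMap_sub_mem (hχsurj : Function.Surjective χ)
    (hχker : RingHom.ker χ.toRingHom = Ideal.span {xi p (n+1)})
    (P : Lam p (n+1)) (Q : Lam p n) (y : Lam p (n+1)) :
    χ y ∈ Ideal.span {χ P} ↔ ∃ f, nuMap p n f - y ∈ Ideal.span {P, nuMap p n Q} := by
  constructor
  · intro hy
    obtain ⟨c, hc⟩ := Ideal.mem_span_singleton'.mp hy
    obtain ⟨z, rfl⟩ := hχsurj c
    obtain ⟨f, hf⟩ := (map_eq_zero_iff_exists_nuMap hχker (y - z * P)).mp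
      (by rw [map_sub, map_mul, hc, sub_self])
    refine ⟨f, ?_⟩
    rw [hf, sub_sub_cancel_left]
    exact neg_mem (Ideal.mem_span_pair.mpr ⟨z, 0, by ring⟩)
  · rintro ⟨f, hf⟩
    have := map_mem_span_of_mem_span_pair hχker hf
    rwa [map_sub, map_nuMap hχker, zero_sub, neg_mem_iff] at this

end Character

/-- With `J_0 = (P_0)`, `J_{n+1} = (P_{n+1}, ν(P_n))`, one has `ν(J_n) ⊆ J_{n+1}`
and a short exact sequence of `ℤ_p`-modules
`0 → Λ_n/J_n → Λ_{n+1}/J_{n+1} → O/(χ(P_{n+1})) → 0`, where `χ : Λ_{n+1} → O` is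
(induced by) a character of exact order `p^{n+1}`, i.e. a surjection onto a domain
with kernel `ξ_{n+1}Λ_{n+1}`. -/
theorem stmt18 (p : ℕ) [Fact p.Prime] (P : ∀ n, Lam p n)
    (hP0 : IsUnit (P 0)) (hP1 : IsUnit (P 1))
    (a : ℤ_[p]) (ha : (p : ℤ_[p]) ∣ a)
    (hrec : ∀ n : ℕ, piMap p (n+1) (P (n+2)) = a • P (n+1) - nuMap p n (P n))
    (hP10 : ∃ u : ℤ_[p], IsUnit u ∧ piMap p 0 (P 1) = u • P 0)
    (J : ∀ n, Ideal (Lam p n))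
    (hJ0 : J 0 = Ideal.span {P 0})
    (hJ : ∀ n : ℕ, J (n+1) = Ideal.span {P (n+1), nuMap p n (P n)})
    (n : ℕ)
    (O : Type) [CommRing O] [IsDomain O] [Algebra ℤ_[p] O]
    (χ : Lam p (n+1) →ₐ[ℤ_[p]] O) (hχsurj : Function.Surjective χ)
    (hχker : RingHom.ker χ.toRingHom = Ideal.span {xi p (n+1)}) :
    (∀ x ∈ J n, nuMap p n x ∈ J (n+1)) ∧
    ∃ (α : (Lam p n ⧸ J n) →ₗ[ℤ_[p]] (Lam p (n+1) ⧸ J (n+1)))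
      (β : (Lam p (n+1) ⧸ J (n+1)) →ₗ[ℤ_[p]] (O ⧸ Ideal.span {χ (P (n+1))})),
      (∀ x : Lam p n,
        α (Ideal.Quotient.mk (J n) x) = Ideal.Quotient.mk (J (n+1)) (nuMap p n x)) ∧
      (∀ y : Lam p (n+1),
        β (Ideal.Quotient.mk (J (n+1)) y) =
          Ideal.Quotient.mk (Ideal.span {χ (P (n+1))}) (χ y)) ∧
      Function.Injective α ∧ Function.Surjective β ∧
      (∀ b, β b = 0 ↔ b ∈ LinearMap.range α) := by
  have hνJ : ∀ x ∈ J n, nuLinearMap p n x ∈ J (n+1) := nuMap_mem_succ hrec hJ0 hJ n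
  have hχP : χ (P (n+1)) ≠ 0 :=
    map_ne_zero_of_red_piMap_ne_zero hχker (red_piMap_seq_ne_zero hP0 hP1 ha hrec hP10 n)
  have hχJ : J (n+1) ≤ (Ideal.span {χ (P (n+1))}).comap χ := fun z hz =>
    map_mem_span_of_mem_span_pair hχker (hJ n ▸ hz)
  refine ⟨hνJ, Ideal.quotientMapₗ (J n) (J (n+1)) (nuLinearMap p n) hνJ,
    (Ideal.quotientMapₐ _ χ hχJ).toLinearMap, fun x => rfl, fun y => rfl, ?_, ?_, ?_⟩
  · refine (injective_iff_map_eq_zero _).mpr fun x hx => ?_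
    obtain ⟨f, rfl⟩ := Ideal.Quotient.mk_surjective x
    have hf : nuMap p n f ∈ J (n+1) := Ideal.Quotient.eq_zero_iff_mem.mp hx
    exact Ideal.Quotient.eq_zero_iff_mem.mpr <| mem_of_nuMap_mem_span_pair hχker
      (seq_mem hJ0 hJ n) (piMap_seq_mem hrec hP10 hJ0 hJ n) hχP (hJ n ▸ hf)
  · exact Ideal.quotientMap_surjective (H := hχJ) hχsurj
  · have hexact := map_mem_span_iff_exists_nuMap_sub_mem hχsurj hχker (P (n+1)) (P n)
    rw [← hJ n] at hexact
    intro b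
    obtain ⟨y, rfl⟩ := Ideal.Quotient.mk_surjective b
    rw [LinearMap.mem_range, Ideal.Quotient.mk_surjective.exists]
    simp only [Ideal.quotientMapₗ_mk, Ideal.Quotient.eq]
    exact Ideal.Quotient.eq_zero_iff_mem.trans (hexact y)
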